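/- arXiv:2107.04455 — 4 statements merged into one kernel-verified Lean document; each statement's English description precedes it below -/
import Mathlib

section
/- For streams σ, τ over a field K, the derivative of the convolution product satisfies (σ × τ)' = σ' × τ + σ × τ' − x × σ' × τ', where x = (0,1,0,0,...). -/
def sderiv {K : Type*} (σ : ℕ → K) : ℕ → K := fun i => σ (i + 1)

def sX {K : Type*} [Field K] : ℕ → K := fun i => if i = 1 then 1 else 0

def sconv {K : Type*} [Field K] (σ τ : ℕ → K) : ℕ → K :=
  fun i => ∑ j ∈ Finset.range (i + 1), σ j * τ (i - j)

/-- (σ × τ)' = σ' × τ + σ × τ' − x × σ' × τ'. -/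
theorem conv_deriv {K : Type*} [Field K] (σ τ : ℕ → K) :
    sderiv (sconv σ τ) =
      sconv (sderiv σ) τ + sconv σ (sderiv τ) -
        sconv sX (sconv (sderiv σ) (sderiv τ)) := by
  funext i
  simp only [Pi.add_apply, Pi.sub_apply, sderiv, sconv, sX, ite_mul, zero_mul, one_mul,
    Finset.sum_ite_eq' (Finset.range (i + 1)) 1]
  cases i with
  | zero => simp [Finset.sum_range_succ]; ring
  | succ n =>
    simp only [Finset.mem_range, Nat.lt_add_one_iff, Nat.le_add_left, if_pos,
      show 1 ≤ n + 1 from Nat.le_add_left 1 n, if_true]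
    rw [eq_sub_iff_add_eq]
    rw [Finset.sum_range_succ' (fun j => σ j * τ (n + 1 + 1 - j)) (n + 2),
        Finset.sum_range_succ' (fun j => σ j * τ (n + 1 - j + 1)) (n + 1)]
    have h1 : ∀ j, n + 1 + 1 - (j + 1) = n + 1 - j := fun j => by omega
    have h2 : (∑ j ∈ Finset.range (n + 1 - 1 + 1), σ (j + 1) * τ (n + 1 - 1 - j + 1)) =
        ∑ j ∈ Finset.range (n + 1), σ (j + 1) * τ (n + 1 - (j + 1) + 1) := by
      apply Finset.sum_congr (by norm_num)
      intro j hj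
      simp only [Finset.mem_range] at hj
      congr 2
      omega
    simp only [h1, h2]
    rw [show n + 1 + 1 - 0 = n + 1 - 0 + 1 by omega]
    ring
end

section
/- Let R be a binary relation on streams over a field K, and let R̂ be its linear closure, consisting of all pairs (Σᵢ rᵢσᵢ, Σᵢ rᵢτᵢ) with (σᵢ,τᵢ) ∈ R and rᵢ ∈ K. If R is a bisimulation up to linearity (i.e., (σ,τ) ∈ R implies σ(0)=τ(0) and (σ',τ') ∈ R̂), then R̂ is a bisimulation, and hence any two streams related by R are equal. -/
/-- A bisimulation on streams. -/
def IsBisim {K : Type*} (S : (ℕ → K) → (ℕ → K) → Prop) : Prop :=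
  ∀ σ τ : ℕ → K, S σ τ → σ 0 = τ 0 ∧ S (sderiv σ) (sderiv τ)

/-- The linear closure of a relation on streams over a field K. -/
def LinClosure {K : Type*} [Field K] (R : (ℕ → K) → (ℕ → K) → Prop) :
    (ℕ → K) → (ℕ → K) → Prop :=
  fun a b => ∃ (n : ℕ) (r : ℕ → K) (σ τ : ℕ → ℕ → K),
    (∀ i < n, R (σ i) (τ i)) ∧
    a = (fun j => ∑ i ∈ Finset.range n, r i * σ i j) ∧
    b = (fun j => ∑ i ∈ Finset.range n, r i * τ i j)

/-! Viewed as a set of pairs, `LinClosure R` is the `K`-linear span of `R`. Reading off the heads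
and taking derivatives are linear maps on pairs of streams, so an equation between heads, and
membership of the derivative pair in that span, pass from `R` to its span. Bisimilar streams then
agree at every index, by induction on the index. -/

open Finset Submodule

section LinClosure

variable {K : Type*} [Field K] {R : (ℕ → K) → (ℕ → K) → Prop}

theorem linClosure_iff_mem_span {a b : ℕ → K} :
    LinClosure R a b ↔ (a, b) ∈ span K {p | R p.1 p.2} := by
  constructor
  · rintro ⟨n, r, σ, τ, hR, rfl, rfl⟩
    have hsum : (fun j => ∑ i ∈ range n, r i * σ i j, fun j => ∑ i ∈ range n, r i * τ i j) =
        ∑ i ∈ range n, r i • (σ i, τ i) := by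
      ext j <;> simp [Prod.fst_sum, Prod.snd_sum, Finset.sum_apply]
    rw [hsum]
    exact sum_mem fun i hi => smul_mem _ _ (subset_span (hR i (mem_range.1 hi)))
  · intro hab
    obtain ⟨n, c, p, hsum⟩ := mem_span_set'.1 hab
    have ha := congrArg Prod.fst hsum
    have hb := congrArg Prod.snd hsum
    simp only [Prod.fst_sum, Prod.snd_sum, Prod.smul_fst, Prod.smul_snd] at ha hb
    subst ha hb
    refine ⟨n, fun i => if h : i < n then c ⟨i, h⟩ else 0,
      fun i => if h : i < n then (p ⟨i, h⟩).1.1 else 0,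
      fun i => if h : i < n then (p ⟨i, h⟩).1.2 else 0, ?_, ?_, ?_⟩
    · intro i hi
      simp only [hi, dif_pos]
      exact (p ⟨i, hi⟩).2
    all_goals ext j; simp [Finset.sum_apply, ← Fin.sum_univ_eq_sum_range]

theorem LinClosure.of_rel {σ τ : ℕ → K} (h : R σ τ) : LinClosure R σ τ :=
  linClosure_iff_mem_span.2 (subset_span h)

theorem isBisim_linClosure
    (h : ∀ σ τ : ℕ → K, R σ τ → σ 0 = τ 0 ∧ LinClosure R (sderiv σ) (sderiv τ)) :
    IsBisim (LinClosure R) := by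
  let S := span K {p : (ℕ → K) × (ℕ → K) | R p.1 p.2}
  let head₁ := (LinearMap.proj 0).comp (LinearMap.fst K (ℕ → K) (ℕ → K))
  let head₂ := (LinearMap.proj 0).comp (LinearMap.snd K (ℕ → K) (ℕ → K))
  -- `sderiv σ` is definitionally `shift σ`
  let shift := LinearMap.funLeft K K Nat.succ
  have head_eq : Set.EqOn head₁ head₂ S := LinearMap.eqOn_span' fun p hp => (h _ _ hp).1
  have shift_mem : S ≤ S.comap (shift.prodMap shift) :=
    span_le.2 fun p hp => linClosure_iff_mem_span.1 (h _ _ hp).2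
  intro σ τ hστ
  rw [linClosure_iff_mem_span] at hστ ⊢
  exact ⟨head_eq hστ, shift_mem hστ⟩

end LinClosure

theorem IsBisim.eq {K : Type*} {S : (ℕ → K) → (ℕ → K) → Prop} (hS : IsBisim S)
    {σ τ : ℕ → K} (h : S σ τ) : σ = τ := by
  funext j
  induction j generalizing σ τ with
  | zero => exact (hS σ τ h).1
  | succ j ih => exact ih (hS σ τ h).2

/-- If R is a bisimulation up to linearity, then its linear closure is a
bisimulation and any two streams related by R are equal. -/
theorem bisim_up_to_linearity {K : Type*} [Field K]
    (R : (ℕ → K) → (ℕ → K) → Prop)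
    (h : ∀ σ τ : ℕ → K, R σ τ → σ 0 = τ 0 ∧ LinClosure R (sderiv σ) (sderiv τ)) :
    IsBisim (LinClosure R) ∧ ∀ σ τ : ℕ → K, R σ τ → σ = τ :=
  ⟨isBisim_linClosure h, fun _ _ hστ => (isBisim_linClosure h).eq (LinClosure.of_rel hστ)⟩
end

section
/- Any two stream products satisfying the same stream differential equation coincide: if ⋆₁ and ⋆₂ are binary operations on streams over K such that for all σ, τ: (σ ⋆ₘ τ)(0) = σ(0)τ(0) and (σ ⋆ₘ τ)' = σ' ⋆ₘ τ + σ ⋆ₘ τ' (for m = 1,2), then ⋆₁ = ⋆₂ (uniqueness of solutions of the shuffle SDE); in particular both equal the shuffle product. -/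
def shuffle {K : Type*} [Field K] (σ τ : ℕ → K) : ℕ → K :=
  fun i => ∑ j ∈ Finset.range (i + 1), (Nat.choose i j : K) * σ j * τ (i - j)

lemma shuffle_rec {K : Type*} [Field K] (σ τ : ℕ → K) (n : ℕ) :
    shuffle σ τ (n + 1) = shuffle (sderiv σ) τ n + shuffle σ (sderiv τ) n := by
  simp only [shuffle, sderiv]
  rw [Finset.sum_range_succ']
  have h1 : ∀ j ∈ Finset.range (n + 1),
      ((n + 1).choose (j + 1) : K) * σ (j + 1) * τ (n + 1 - (j + 1)) =
      (n.choose j : K) * σ (j + 1) * τ (n - j) +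
      (n.choose (j + 1) : K) * σ (j + 1) * τ (n + 1 - (j + 1)) := by
    intro j hj
    rw [Nat.choose_succ_succ']
    push_cast
    ring
  rw [Finset.sum_congr rfl h1, Finset.sum_add_distrib, add_assoc]
  congr 1
  have h2 : (∑ j ∈ Finset.range (n + 1), (n.choose (j + 1) : K) * σ (j + 1) * τ (n + 1 - (j + 1)))
      + (↑((n + 1).choose 0) : K) * σ 0 * τ (n + 1 - 0)
      = ∑ k ∈ Finset.range (n + 2), (n.choose k : K) * σ k * τ (n + 1 - k) := by
    rw [Finset.sum_range_succ' (fun k => (n.choose k : K) * σ k * τ (n + 1 - k)) (n + 1)]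
    simp
  rw [h2, Finset.sum_range_succ]
  simp only [Nat.choose_succ_self, Nat.cast_zero, zero_mul, add_zero]
  apply Finset.sum_congr rfl
  intro k hk
  simp only [Finset.mem_range] at hk
  have : n + 1 - k = n - k + 1 := by omega
  rw [this]

lemma sde_eq_shuffle {K : Type*} [Field K]
    (star : (ℕ → K) → (ℕ → K) → (ℕ → K))
    (hh : ∀ σ τ : ℕ → K, star σ τ 0 = σ 0 * τ 0)
    (hd : ∀ σ τ : ℕ → K,
      sderiv (star σ τ) = star (sderiv σ) τ + star σ (sderiv τ)) :
    ∀ (i : ℕ) (σ τ : ℕ → K), star σ τ i = shuffle σ τ i := by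
  intro i
  induction i with
  | zero => intro σ τ; simp [shuffle, hh]
  | succ n ih =>
    intro σ τ
    have h := congrFun (hd σ τ) n
    simp only [sderiv, Pi.add_apply] at h
    rw [h, ih, ih, shuffle_rec]

/-- Uniqueness of solutions of the shuffle SDE: any two operations satisfying it
coincide, and both equal the shuffle product. -/
theorem shuffle_sde_unique {K : Type*} [Field K]
    (star1 star2 : (ℕ → K) → (ℕ → K) → (ℕ → K))
    (h1_head : ∀ σ τ : ℕ → K, star1 σ τ 0 = σ 0 * τ 0)
    (h1_deriv : ∀ σ τ : ℕ → K,
      sderiv (star1 σ τ) = star1 (sderiv σ) τ + star1 σ (sderiv τ))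
    (h2_head : ∀ σ τ : ℕ → K, star2 σ τ 0 = σ 0 * τ 0)
    (h2_deriv : ∀ σ τ : ℕ → K,
      sderiv (star2 σ τ) = star2 (sderiv σ) τ + star2 σ (sderiv τ)) :
    star1 = star2 ∧ star1 = fun σ τ => shuffle σ τ := by
  have e1 := sde_eq_shuffle star1 h1_head h1_deriv
  have e2 := sde_eq_shuffle star2 h2_head h2_deriv
  constructor
  · funext σ τ i; rw [e1 i σ τ, e2 i σ τ]
  · funext σ τ i; exact e1 i σ τ
end

section
/- Correctness of the zero-equivalence criterion: let δ : P → P be a K-linear map on the polynomial ring P = K[x₀,...,xₙ] such that δ(q·p) ∈ ⟨p, δ(p)⟩ (the ideal generated by p and δ(p)) for all p, q ∈ P, and let o : P → K be evaluation at a point ρ ∈ K^{n+1}. Write p⁽⁰⁾ = p and p⁽ʲ⁺¹⁾ = δ(p⁽ʲ⁾). If there exists k ≥ 1 with o(p⁽ʲ⁾) = 0 for all 0 ≤ j ≤ k−1 and p⁽ᵏ⁾ ∈ ⟨p⁽⁰⁾, ..., p⁽ᵏ⁻¹⁾⟩, then o(p⁽ʲ⁾) = 0 for all j ≥ 0. 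-/
open MvPolynomial

/-- Correctness of the zero-equivalence criterion: if δ is K-linear with
δ(q·p) ∈ ⟨p, δ(p)⟩ for all p, q, o is evaluation at ρ, and for some k ≥ 1 all
derivatives p⁽ʲ⁾ (j < k) evaluate to 0 at ρ while p⁽ᵏ⁾ lies in the ideal
generated by p⁽⁰⁾,...,p⁽ᵏ⁻¹⁾, then every p⁽ʲ⁾ evaluates to 0 at ρ. -/
theorem zero_equivalence_criterion {K : Type*} [Field K] {n : ℕ}
    (δ : MvPolynomial (Fin (n + 1)) K →ₗ[K] MvPolynomial (Fin (n + 1)) K)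
    (hδ : ∀ p q : MvPolynomial (Fin (n + 1)) K,
      δ (q * p) ∈ Ideal.span {p, δ p})
    (ρ : Fin (n + 1) → K)
    (p : MvPolynomial (Fin (n + 1)) K) (k : ℕ) (hk : 1 ≤ k)
    (hzero : ∀ j < k, eval ρ ((⇑δ)^[j] p) = 0)
    (hmem : (⇑δ)^[k] p ∈ Ideal.span {q | ∃ j < k, q = (⇑δ)^[j] p}) :
    ∀ j, eval ρ ((⇑δ)^[j] p) = 0 := by
  set I : Ideal (MvPolynomial (Fin (n + 1)) K) :=
    Ideal.span {q | ∃ j < k, q = (⇑δ)^[j] p} with hI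
  -- δ maps I into I
  have key : ∀ x ∈ I, δ x ∈ I := by
    intro x hx
    have h : x ∈ I ∧ δ x ∈ I := by
      refine Submodule.span_induction ?_ ?_ ?_ ?_ hx
      · rintro q ⟨j, hj, rfl⟩
        refine ⟨Ideal.subset_span ⟨j, hj, rfl⟩, ?_⟩
        rw [← Function.iterate_succ_apply' (⇑δ)]
        rcases lt_or_eq_of_le (Nat.succ_le_of_lt hj) with h | h
        · exact Ideal.subset_span ⟨j + 1, h, rfl⟩
        · rw [h]; exact hmem
      · exact ⟨I.zero_mem, by rw [map_zero]; exact I.zero_mem⟩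
      · intro a b _ _ ha hb
        exact ⟨I.add_mem ha.1 hb.1, by rw [map_add]; exact I.add_mem ha.2 hb.2⟩
      · intro r a _ ha
        refine ⟨I.smul_mem r ha.1, ?_⟩
        have h2 : δ (r * a) ∈ Ideal.span {a, δ a} := hδ a r
        have h3 : Ideal.span {a, δ a} ≤ I := by
          rw [Ideal.span_le]
          rintro q (rfl | rfl)
          · exact ha.1
          · exact ha.2
        simpa [smul_eq_mul] using h3 h2
    exact h.2
  -- every derivative is in I
  have memI : ∀ j, (⇑δ)^[j] p ∈ I := by
    intro j
    induction j with
    | zero => exact Ideal.subset_span ⟨0, hk, rfl⟩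
    | succ j ih =>
      rw [Function.iterate_succ_apply' (⇑δ)]
      exact key _ ih
  -- eval ρ vanishes on I
  intro j
  have hle : I ≤ RingHom.ker (eval ρ) := by
    rw [hI, Ideal.span_le]
    rintro q ⟨i, hi, rfl⟩
    exact hzero i hi
  exact hle (memI j)
end
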